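/- arXiv:1106.1913 — 2 statements merged into one kernel-verified Lean document; each statement's English description precedes it below -/
import Mathlib

section
/- Let I ⊆ S be a stable monomial ideal. (a) Every monomial w ∈ I can be written in exactly one way as w = u·m where m is a minimal monomial generator of I and u is a monomial with max(supp(m)) ≤ min(supp(u)) (the Eliahou–Kervaire decomposition). (b) If m_i is a minimal generator of I and j < max(supp(m_i)), and x_j·m_i = u·m_k is the decomposition from (a), then max(supp(m_k)) ≤ max(supp(m_i)). Consequently, with its minimal generators ordered by decreasing lexicographic order, I is crit-monotone: A_{k} ⊆ A_{i} whenever m_k is the generator appearing in the decomposition of x_j·m_i for j ∈ A_i. -/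
/-!
For existence, take among the generators dividing `w` the least one `m` in the colexicographic
order (`x_1 < ⋯ < x_n`). If some `x_b` in the cofactor has `b < M = max supp(m)`, stability puts
`x_b m / x_M` in `I`; a generator dividing it also divides `w` and is colex-smaller than `m`.
For uniqueness, if `u m = u' m'` are two decompositions with `m <lex m'`, the first index where
they differ lies in `supp(u)`, so `m` vanishes beyond it and `m ∣ m'`, contradicting minimality.
For (b), `supp(m_κ) ⊆ supp(m_i) ∪ {j}`. Crit-monotonicity follows from
`A_i = {g : g < max supp(m_i)}`: the inclusion `⊇` comes from the decomposition of `x_g m_i`,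
whose generator is lex-larger than `m_i`, and `⊆` from the same lex argument as uniqueness.
-/

open MvPolynomial

namespace Finsupp

variable {σ : Type*} [LinearOrder σ]

theorem le_of_toLex_lt {f g : σ →₀ ℕ} (hlt : toLex f < toLex g)
    (hsupp : ∀ p, f p < g p → ∀ a ∈ f.support, a ≤ p) : f ≤ g := by
  obtain ⟨p, hbelow, hp⟩ := Lex.lt_iff.mp hlt
  intro s
  rcases lt_trichotomy s p with hs | rfl | hs
  · exact (hbelow s hs).le
  · exact hp.le
  · have : s ∉ f.support := fun hs' => (hsupp p hp s hs').not_gt hs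
    simp [notMem_support_iff.mp this]

theorem toLex_lt_of_add_eq {f g β γ : σ →₀ ℕ} (heq : β + f = γ + g)
    (hf : ∀ a ∈ f.support, ∀ c ∈ β.support, a ≤ c) (hnle : ¬ f ≤ g) :
    toLex g < toLex f := by
  refine lt_of_not_ge fun hle => hnle ?_
  rcases hle.lt_or_eq with hlt | hfg
  · refine le_of_toLex_lt hlt fun p hp a ha => hf a ha p ?_
    have := congrArg (· p) heq
    simp only [coe_add, Pi.add_apply] at this
    exact mem_support_iff.mpr (by omega)
  · exact (toLex_inj.mp hfg).le

theorem exists_lt_mem_support_of_le_single_add {f h : σ →₀ ℕ} {g : σ}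
    (hlt : toLex f < toLex h) (hnle : ¬ f ≤ h) (hle : h ≤ single g 1 + f) :
    ∃ q ∈ f.support, g < q := by
  by_contra! hsupp
  refine hnle (le_of_toLex_lt hlt fun p hp a ha => ?_)
  have hgp : p = g := by
    by_contra hne
    have := hle p
    simp [Ne.symm hne] at this
    omega
  exact hgp ▸ hsupp a ha

theorem toColex_add_single_tsub_single_lt {f : σ →₀ ℕ} {b M : σ} (hM : M ∈ f.support)
    (hbM : b < M) :
    toColex (f + single b 1 - single M 1) < toColex f := by
  have hcancel : f + single b 1 - single M 1 + single M 1 = f + single b 1 := by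
    refine tsub_add_cancel_of_le (le_trans ?_ le_self_add)
    simpa [Nat.one_le_iff_ne_zero] using mem_support_iff.mp hM
  refine lt_of_not_ge fun hle => (Colex.single_lt_iff.mpr hbM).not_ge ?_
  have hsum := congrArg toColex hcancel
  rw [toColex_add, toColex_add] at hsum
  refine le_of_add_le_add_left (a := toColex f) ?_
  calc toColex f + toColex (single M 1)
      ≤ toColex (f + single b 1 - single M 1) + toColex (single M 1) := add_le_add hle le_rfl
    _ = toColex f + toColex (single b 1) := hsum

end Finsupp

open Finsupp

section Ideal

variable {R σ ι : Type*} [CommSemiring R] [Nontrivial R]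

theorem monomial_mem_span_monomial_image_iff (m : ι → σ →₀ ℕ) (s : Set ι) (α : σ →₀ ℕ) :
    monomial α (1 : R) ∈ Ideal.span ((fun i => monomial (m i) (1 : R)) '' s) ↔
      ∃ i ∈ s, m i ≤ α := by
  classical
  rw [← Set.image_image (fun μ => monomial μ (1 : R)) m, mem_ideal_span_monomial_image,
    support_monomial, if_neg one_ne_zero]
  simp

theorem X_mem_colon_span_monomial_iff (m : ι → σ →₀ ℕ) (s : Set ι) (μ : σ →₀ ℕ) (g : σ) :
    X g ∈ (Ideal.span ((fun i => monomial (m i) (1 : R)) '' s)).colon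
        (Ideal.span {monomial μ (1 : R)}) ↔ ∃ i ∈ s, m i ≤ single g 1 + μ := by
  rw [Ideal.mem_colon_span_singleton, X, monomial_mul, one_mul,
    monomial_mem_span_monomial_image_iff]

end Ideal

section StableFamily

variable {σ ι : Type*} [LinearOrder σ]

def IsStableFamily (m : ι → σ →₀ ℕ) : Prop :=
  ∀ i, ∀ b ∈ (m i).support, (∀ l ∈ (m i).support, l ≤ b) →
    ∀ j < b, ∃ l, m l ≤ m i + single j 1 - single b 1

variable {m : ι → σ →₀ ℕ}

theorem IsStableFamily.exists_decomposition [WellFoundedLT σ] (hm : IsStableFamily m)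
    {α : σ →₀ ℕ} (hα : ∃ i, m i ≤ α) :
    ∃ i, m i ≤ α ∧ ∀ a ∈ (m i).support, ∀ b ∈ (α - m i).support, a ≤ b := by
  obtain ⟨i, hi, hleast⟩ :=
    (InvImage.wf (fun i => toColex (m i)) wellFounded_lt).has_min {i | m i ≤ α} hα
  refine ⟨i, hi, fun a ha b hb => le_of_not_gt fun hba => ?_⟩
  have hM : (m i).support.max' ⟨a, ha⟩ ∈ (m i).support := Finset.max'_mem _ _
  have hbM : b < (m i).support.max' ⟨a, ha⟩ := hba.trans_le ((m i).support.le_max' a ha)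
  obtain ⟨l, hl⟩ := hm i _ hM (fun l hl => (m i).support.le_max' l hl) b hbM
  have hbα : m i + single b 1 ≤ α :=
    (add_le_add_right (single_le_iff.mpr (Nat.one_le_iff_ne_zero.mpr (mem_support_iff.mp hb)))
      _).trans (add_tsub_cancel_of_le hi).le
  exact hleast l (hl.trans (tsub_le_self.trans hbα))
    ((toColex_monotone hl).trans_lt (toColex_add_single_tsub_single_lt hM hbM))

theorem eq_of_add_eq_of_support_le (hmin : ∀ i j, i ≠ j → ¬ m i ≤ m j) {i j : ι}
    {β γ : σ →₀ ℕ} (heq : β + m i = γ + m j)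
    (hi : ∀ a ∈ (m i).support, ∀ c ∈ β.support, a ≤ c)
    (hj : ∀ a ∈ (m j).support, ∀ c ∈ γ.support, a ≤ c) : i = j ∧ β = γ := by
  obtain rfl : i = j := by
    by_contra hne
    exact (toLex_lt_of_add_eq heq hi (hmin i j hne)).not_gt
      (toLex_lt_of_add_eq heq.symm hj (hmin j i (Ne.symm hne)))
  exact ⟨rfl, add_right_cancel heq⟩

theorem IsStableFamily.exists_lt_le_single_add [WellFoundedLT σ] [LinearOrder ι]
    (hm : IsStableFamily m) (hmin : ∀ i j, i ≠ j → ¬ m i ≤ m j)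
    (hsort : StrictAnti fun i => toLex (m i)) {κ : ι} {q g : σ} (hq : q ∈ (m κ).support)
    (hgq : g < q) : ∃ l < κ, m l ≤ single g 1 + m κ := by
  obtain ⟨l, hl, hdec⟩ := hm.exists_decomposition (α := single g 1 + m κ) ⟨κ, le_add_self⟩
  have hlκ : l ≠ κ := by
    rintro rfl
    exact (hdec q hq g (by simp)).not_gt hgq
  exact ⟨l, hsort.lt_iff_gt.mp (toLex_lt_of_add_eq (tsub_add_cancel_of_le hl) hdec
    (hmin l κ hlκ)), hl⟩

end StableFamily

/-- Let `I ⊆ S = k[x_1,…,x_n]` be a stable monomial ideal with minimal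
monomial generators `m_1, …, m_t` (exponent vectors `m : Fin t → (Fin n →₀ ℕ)`), listed in
decreasing lexicographic order.
(a) Every monomial `w ∈ I` can be written in exactly one way as `w = u·m_i` with
`max(supp(m_i)) ≤ min(supp(u))` (the Eliahou–Kervaire decomposition).
(b) If `j < max(supp(m_i))` and `x_j·m_i = u·m_κ` is the decomposition from (a), then
`max(supp(m_κ)) ≤ max(supp(m_i))`; consequently `I` is crit-monotone:
`A_κ ⊆ A_i`, where `A_i = { g : x_g ∈ (m_1,…,m_{i−1}) : m_i }`. -/
theorem stmt_9 (k : Type) [Field k] (n t : ℕ)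
    (m : Fin t → (Fin n →₀ ℕ))
    (hmin : ∀ i j : Fin t, i ≠ j → ¬ m i ≤ m j)
    (hstable : ∀ α : Fin n →₀ ℕ,
      monomial α (1 : k) ∈ Ideal.span (Set.range fun i => monomial (m i) (1 : k)) →
      ∀ b ∈ α.support, (∀ l ∈ α.support, l ≤ b) →
      ∀ i : Fin n, i < b →
        monomial (α + Finsupp.single i 1 - Finsupp.single b 1) (1 : k) ∈
          Ideal.span (Set.range fun i => monomial (m i) (1 : k)))
    (hsort : ∀ i j : Fin t, i < j → toLex (m j) < toLex (m i)) :
    -- (a) existence and uniqueness of the Eliahou–Kervaire decomposition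
    (∀ α : Fin n →₀ ℕ,
      monomial α (1 : k) ∈ Ideal.span (Set.range fun i => monomial (m i) (1 : k)) →
      ∃! p : Fin t × (Fin n →₀ ℕ),
        α = p.2 + m p.1 ∧ ∀ a ∈ (m p.1).support, ∀ b ∈ p.2.support, a ≤ b)
    ∧
    -- (b) the decomposition of `x_j·m_i` for `j < max(supp(m_i))` does not increase
    -- `max(supp(−))`, and crit-monotonicity follows
    (∀ (i κ : Fin t) (j : Fin n) (β : Fin n →₀ ℕ),
      (∃ b ∈ (m i).support, (∀ l ∈ (m i).support, l ≤ b) ∧ j < b) →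
      Finsupp.single j 1 + m i = β + m κ →
      (∀ a ∈ (m κ).support, ∀ c ∈ β.support, a ≤ c) →
      (∀ a ∈ (m κ).support, ∃ b ∈ (m i).support, a ≤ b)
      ∧
      {g : Fin n | (X g : MvPolynomial (Fin n) k) ∈
          Submodule.colon
            (Ideal.span ((fun l => monomial (m l) (1 : k)) '' {l | l < κ}))
            (Ideal.span {monomial (m κ) (1 : k)})}
        ⊆
      {g : Fin n | (X g : MvPolynomial (Fin n) k) ∈
          Submodule.colon
            (Ideal.span ((fun l => monomial (m l) (1 : k)) '' {l | l < i}))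
            (Ideal.span {monomial (m i) (1 : k)})}) := by
  have hmem : ∀ α, monomial α (1 : k) ∈ Ideal.span (Set.range fun i => monomial (m i) (1 : k)) ↔
      ∃ i, m i ≤ α := by
    intro α
    rw [← Set.image_univ, monomial_mem_span_monomial_image_iff]
    simp
  have hm : IsStableFamily m := fun i b hb hbmax j hjb =>
    (hmem _).mp (hstable (m i) ((hmem _).mpr ⟨i, le_rfl⟩) b hb hbmax j hjb)
  have hanti : StrictAnti fun i => toLex (m i) := fun i j => hsort i j
  refine ⟨fun α hα => ?_, fun i κ j β ⟨b, hb, hbmax, hjb⟩ heq _ => ?_⟩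
  · obtain ⟨i, hi, hdec⟩ := hm.exists_decomposition ((hmem α).mp hα)
    refine ⟨(i, α - m i), ⟨(tsub_add_cancel_of_le hi).symm, hdec⟩, ?_⟩
    rintro ⟨j, γ⟩ ⟨rfl, hγ⟩
    obtain ⟨rfl, hβ⟩ := eq_of_add_eq_of_support_le hmin (tsub_add_cancel_of_le hi) hdec hγ
    rw [hβ]
  · have hκ : ∀ a ∈ (m κ).support, a ≤ b := by
      intro a ha
      have ha' : a ∈ (single j 1 + m i).support := heq ▸ support_mono le_add_self ha
      rcases Finset.mem_union.mp (support_add ha') with hj | hi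
      · exact ((mem_support_single _ _ _).mp hj).1 ▸ hjb.le
      · exact hbmax a hi
    refine ⟨fun a ha => ⟨b, hb, hκ a ha⟩, fun g hg => ?_⟩
    obtain ⟨l, hlκ, hle⟩ := (X_mem_colon_span_monomial_iff _ _ _ _).mp hg
    obtain ⟨q, hq, hgq⟩ :=
      exists_lt_mem_support_of_le_single_add (hanti hlκ) (hmin κ l (ne_of_gt hlκ)) hle
    exact (X_mem_colon_span_monomial_iff _ _ _ _).mpr
      (hm.exists_lt_le_single_add hmin hanti hb (hgq.trans_le (hκ q hq)))
end

section
/- Let M be a matroid on {1,...,n} with bases B_1, ..., B_t listed so that x^{B_1} <_lex ... <_lex x^{B_t}, and let I be the squarefree matroidal ideal generated by the monomials m_i = x^{B_i}, which has linear quotients with respect to this ordering; let A_i be the critical-index sets. Then I is crit-monotone: for every i and every j ∈ A_i, the unique decomposition x_j·m_i = u·m_k with supp(u) ∩ A_k = ∅ has u equal to a single variable x_l, and A_k ⊆ A_i. -/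
open MvPolynomial
open scoped symmDiff

/-- `lexLT B' B` encodes `x^{B'} <_lex x^{B}` in the lexicographic order with
`x_1 > x_2 > … > x_n`: the minimum element of the symmetric difference `B ∆ B'`
belongs to `B`. -/
def lexLT {n : ℕ} (B' B : Finset (Fin n)) : Prop :=
  ∃ a ∈ B, a ∈ B ∆ B' ∧ ∀ b ∈ B ∆ B', a ≤ b

/-- The exponent vector of the squarefree monomial `x^B`. -/
noncomputable def baseExp {n : ℕ} (B : Finset (Fin n)) : Fin n →₀ ℕ :=
  ∑ a ∈ B, Finsupp.single a 1

/-! A variable `x_p` lies in `(m_1, …, m_{i-1}) : m_i` iff some earlier base lies in `B_i ∪ {p}`,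
i.e. iff `p ∉ B_i` and `B_i - h + p` is a base for some `h < p`: that exchanged base precedes
`B_i` lexicographically exactly when `h < p`. Comparing degrees, `x_j m_i = u m_κ` forces
`u = x_g` and `B_κ = B_i + j - g`. If `g ≠ j`, then `g ∉ A_κ` forces `g < j`, and an index `p`
that is critical for `B_κ` through some `h` is critical for `B_i`: directly if `h = j`, by basis
exchange at `h` if `h < g` (the other outcome of that exchange would make `g` critical for `B_κ`),
and by the dual exchange at `p` if `g < h`. -/

namespace Finset

variable {α : Type*} [DecidableEq α]

lemma exists_erase_eq_of_subset_of_card_eq_add_one {C E : Finset α} (h : C ⊆ E)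
    (hcard : #E = #C + 1) : ∃ a ∈ E, E.erase a = C :=
  covBy_iff_exists_erase.1 <| covBy_iff_card_sdiff_eq_one.2
    ⟨h, by rw [card_sdiff_of_subset h]; omega⟩

lemma exists_eq_insert_erase_of_subset_insert {C D : Finset α} {p : α} (h : C ⊆ insert p D)
    (hcard : #C = #D) (hne : C ≠ D) : p ∉ D ∧ ∃ a ∈ D, C = insert p (D.erase a) := by
  have hpD : p ∉ D := by
    intro hpD
    rw [insert_eq_of_mem hpD] at h
    exact hne (eq_of_subset_of_card_le h hcard.ge)
  obtain ⟨a, ha, rfl⟩ := exists_erase_eq_of_subset_of_card_eq_add_one h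
    (by rw [card_insert_of_notMem hpD, hcard])
  obtain rfl | hap := eq_or_ne a p
  · exact absurd (erase_insert hpD) hne
  · exact ⟨hpD, a, (mem_insert.1 ha).resolve_left hap, (erase_insert_of_ne (Ne.symm hap))⟩

end Finset

open Finset

variable {n : ℕ}

lemma baseExp_apply (C : Finset (Fin n)) (a : Fin n) :
    baseExp C a = if a ∈ C then 1 else 0 := by
  simp [baseExp, Finsupp.finsetSum_apply, Finsupp.single_apply]

lemma baseExp_singleton (a : Fin n) : baseExp {a} = Finsupp.single a 1 :=
  sum_singleton _ _

lemma baseExp_insert {j : Fin n} {C : Finset (Fin n)} (h : j ∉ C) :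
    baseExp (insert j C) = Finsupp.single j 1 + baseExp C :=
  sum_insert h

lemma baseExp_le_iff {C : Finset (Fin n)} {f : Fin n →₀ ℕ} :
    baseExp C ≤ f ↔ ∀ a ∈ C, 1 ≤ f a := by
  simp only [Finsupp.le_def, baseExp_apply]
  refine ⟨fun h a ha => by simpa [ha] using h a, fun h a => ?_⟩
  split_ifs with ha
  exacts [h a ha, Nat.zero_le _]

lemma baseExp_le_single_add_baseExp_iff {C D : Finset (Fin n)} {p : Fin n} :
    baseExp C ≤ Finsupp.single p 1 + baseExp D ↔ C ⊆ insert p D := by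
  simp only [baseExp_le_iff, Finsupp.add_apply, baseExp_apply, Finsupp.single_apply,
    subset_iff, mem_insert]
  refine forall₂_congr fun a _ => ?_
  split_ifs <;> grind

lemma baseExp_le_baseExp_iff {C D : Finset (Fin n)} : baseExp C ≤ baseExp D ↔ C ⊆ D := by
  simp only [baseExp_le_iff, baseExp_apply, subset_iff]
  refine forall₂_congr fun a _ => ?_
  split_ifs <;> simp [*]

lemma exists_eq_single_of_baseExp_eq_add {E D : Finset (Fin n)} {β : Fin n →₀ ℕ}
    (h : baseExp E = β + baseExp D) (hcard : #E = #D + 1) :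
    ∃ g ∈ E, β = Finsupp.single g 1 ∧ D = E.erase g := by
  have hDE : D ⊆ E := baseExp_le_baseExp_iff.1 (h ▸ le_add_self)
  obtain ⟨g, hg, hEg⟩ := exists_erase_eq_of_subset_of_card_eq_add_one hDE hcard
  refine ⟨g, hg, ?_, hEg.symm⟩
  have hsd : E \ D = {g} := by
    rw [← hEg, erase_eq, Finset.sdiff_sdiff_eq_self (singleton_subset_iff.2 hg)]
  rw [← baseExp_singleton, ← hsd]
  exact add_right_cancel (h.symm.trans (sum_sdiff hDE).symm)

lemma lexLT_irrefl (C : Finset (Fin n)) : ¬ lexLT C C := by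
  simp [lexLT]

lemma lexLT_asymm {C D : Finset (Fin n)} (h : lexLT D C) : ¬ lexLT C D := by
  rintro ⟨b, hbD, hb, hbmin⟩
  obtain ⟨a, haC, ha, hamin⟩ := h
  rw [symmDiff_comm] at hb hbmin
  obtain rfl : a = b := le_antisymm (hamin b hb) (hbmin a ha)
  rcases mem_symmDiff.1 ha with ⟨-, h⟩ | ⟨-, h⟩
  exacts [h hbD, h haC]

lemma lexLT_insert_erase_iff {C : Finset (Fin n)} {h p : Fin n} (hh : h ∈ C) (hp : p ∉ C) :
    lexLT (insert p (C.erase h)) C ↔ h < p := by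
  have hsd : C ∆ insert p (C.erase h) = {h, p} := by
    ext a
    simp only [mem_symmDiff, mem_insert, mem_erase, mem_singleton]
    grind
  simp only [lexLT, hsd, mem_insert, mem_singleton, forall_eq_or_imp, forall_eq]
  grind

lemma mem_colon_iff_exists_subset_insert {k ι : Type*} [CommRing k] [Nontrivial k]
    (B : ι → Finset (Fin n)) (s : Set ι) (C : Finset (Fin n)) (p : Fin n) :
    (X p : MvPolynomial (Fin n) k) ∈
        Submodule.colon (Ideal.span ((fun l => monomial (baseExp (B l)) (1 : k)) '' s))
          (Ideal.span {monomial (baseExp C) (1 : k)}) ↔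
      ∃ l ∈ s, B l ⊆ insert p C := by
  classical
  rw [Ideal.mem_colon_span_singleton, X, monomial_mul, one_mul,
    ← Set.image_image (g := (monomial · 1)), mem_ideal_span_monomial_image, support_monomial,
    if_neg one_ne_zero]
  simp [baseExp_le_single_add_baseExp_iff]

namespace Matroid

variable {α : Type*} {M : Matroid α}

lemma IsBase.rev_exchange {B D : Set α} {y : α} (hB : M.IsBase B) (hD : M.IsBase D)
    (hy : y ∈ D \ B) : ∃ x ∈ B \ D, M.IsBase (insert y (B \ {x})) := by
  obtain ⟨x, ⟨⟨hxE, hxD⟩, hxB⟩, hbase⟩ :=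
    hB.compl_isBase_dual.exchange hD.compl_isBase_dual
    ⟨⟨hD.subset_ground hy.1, hy.2⟩, fun h => h.2 hy.1⟩
  have hxB : x ∈ B := by simpa [hxE] using hxB
  refine ⟨x, ⟨hxB, hxD⟩, ?_⟩
  convert hbase.compl_isBase_of_dual using 1
  have hBE := hB.subset_ground
  have hyE := hD.subset_ground hy.1
  ext a
  simp only [Set.mem_sdiff, Set.mem_insert_iff, Set.mem_singleton_iff]
  grind

lemma IsBase.card_eq_card {C D : Finset α} (hC : M.IsBase ↑C) (hD : M.IsBase ↑D) : #C = #D := by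
  simpa using hC.ncard_eq_ncard_of_isBase hD

variable [LinearOrder α]

-- The critical index set `A_i` of the paper is `{p | M.IsCriticalIndex (B i) p}`.
def IsCriticalIndex (M : Matroid α) (C : Finset α) (p : α) : Prop :=
  p ∉ C ∧ ∃ h ∈ C, h < p ∧ M.IsBase ↑(insert p (C.erase h))

lemma coe_insert_erase (C : Finset α) (p h : α) :
    (↑(insert p (C.erase h)) : Set α) = insert p (↑C \ {h}) := by
  simp

lemma IsCriticalIndex.of_exchange {C : Finset α} {g j p : α} (hC : M.IsBase ↑C) (hg : g ∈ C)
    (hj : j ∉ C) (hgc : ¬ M.IsCriticalIndex (insert j (C.erase g)) g)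
    (hp : M.IsCriticalIndex (insert j (C.erase g)) p) : M.IsCriticalIndex C p := by
  set C' := insert j (C.erase g)
  have hgj : g < j := by
    refine lt_of_le_of_ne (not_lt.1 fun hjg => hgc ⟨by grind, j, by grind, hjg, ?_⟩) (by grind)
    rwa [erase_insert (by simp [hj]), insert_erase hg]
  obtain ⟨hpC', h, hh, hhp, hD⟩ := hp
  have hpg : p ≠ g := by rintro rfl; exact hgc ⟨hpC', h, hh, hhp, hD⟩
  have hpC : p ∉ C := by grind
  refine ⟨hpC, ?_⟩
  obtain rfl | hhj := eq_or_ne h j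
  · refine ⟨g, hg, hgj.trans hhp, ?_⟩
    rwa [erase_insert (by simp [hj])] at hD
  have hhC : h ∈ C := by grind
  rw [coe_insert_erase] at hD
  rcases lt_or_gt_of_ne (show h ≠ g by grind) with hhg | hgh
  · obtain ⟨y, hy, hyC⟩ := hC.exchange hD ⟨hhC, by simp [hhp.ne]⟩
    have hyp : y = p := by
      by_contra hyp
      have hyj : y = j := by
        simp only [C', coe_insert, coe_erase, Set.mem_sdiff, Set.mem_insert_iff, SetLike.mem_coe,
          Set.mem_singleton_iff] at hy
        grind
      refine hgc ⟨by grind, h, hh, hhg, ?_⟩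
      convert hyC using 1
      ext a
      simp only [C', coe_insert, coe_erase, Set.mem_sdiff, Set.mem_insert_iff, SetLike.mem_coe,
        Set.mem_singleton_iff, hyj]
      grind
    exact ⟨h, hhC, hhp, by rwa [coe_insert_erase, ← hyp]⟩
  · obtain ⟨x, hx, hxC⟩ := hC.rev_exchange hD ⟨by simp, hpC⟩
    have hxgh : x = g ∨ x = h := by
      simp only [C', coe_insert, coe_erase, Set.mem_sdiff, Set.mem_insert_iff, SetLike.mem_coe,
        Set.mem_singleton_iff] at hx
      grind
    refine ⟨x, hx.1, ?_, by rwa [coe_insert_erase]⟩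
    rcases hxgh with rfl | rfl
    exacts [hgh.trans hhp, hhp]

end Matroid

section LexSorted

variable {t : ℕ} {B : Fin t → Finset (Fin n)}

lemma lt_of_lexLT_of_sorted (hsort : ∀ i j : Fin t, i < j → lexLT (B i) (B j)) {l i : Fin t}
    (h : lexLT (B l) (B i)) : l < i := by
  rcases lt_trichotomy l i with hli | rfl | hil
  exacts [hli, absurd h (lexLT_irrefl _), absurd h (lexLT_asymm (hsort i l hil))]

lemma injective_of_lexLT_sorted (hsort : ∀ i j : Fin t, i < j → lexLT (B i) (B j)) :
    Function.Injective B := by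
  intro l i hli
  by_contra hne
  rcases lt_or_gt_of_ne hne with h | h
  · exact lexLT_irrefl _ (hli ▸ hsort l i h)
  · exact lexLT_irrefl _ (hli ▸ hsort i l h)

variable {M : Matroid (Fin n)}

lemma exists_lt_subset_insert_iff_isCriticalIndex (hbase : ∀ i, M.IsBase ↑(B i))
    (hall : ∀ C : Finset (Fin n), M.IsBase ↑C → ∃ i, B i = C)
    (hsort : ∀ i j : Fin t, i < j → lexLT (B i) (B j)) (i : Fin t) (p : Fin n) :
    (∃ l < i, B l ⊆ insert p (B i)) ↔ M.IsCriticalIndex (B i) p := by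
  constructor
  · rintro ⟨l, hli, hsub⟩
    have hlex := hsort l i hli
    obtain ⟨hp, h, hh, hl⟩ := exists_eq_insert_erase_of_subset_insert hsub
      ((hbase l).card_eq_card (hbase i)) (fun e => lexLT_irrefl _ (e ▸ hlex))
    exact ⟨hp, h, hh, (lexLT_insert_erase_iff hh hp).1 (hl ▸ hlex), hl ▸ hbase l⟩
  · rintro ⟨hp, h, hh, hhp, hD⟩
    obtain ⟨l, hl⟩ := hall _ hD
    refine ⟨l, lt_of_lexLT_of_sorted hsort ?_, ?_⟩
    · rwa [hl, lexLT_insert_erase_iff hh hp]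
    · rw [hl]
      exact insert_subset_insert _ (erase_subset _ _)

lemma mem_colon_iff_isCriticalIndex {k : Type*} [CommRing k] [Nontrivial k]
    (hbase : ∀ i, M.IsBase ↑(B i)) (hall : ∀ C : Finset (Fin n), M.IsBase ↑C → ∃ i, B i = C)
    (hsort : ∀ i j : Fin t, i < j → lexLT (B i) (B j)) (i : Fin t) (p : Fin n) :
    (X p : MvPolynomial (Fin n) k) ∈
        Submodule.colon
          (Ideal.span ((fun l => monomial (baseExp (B l)) (1 : k)) '' {l | l < i}))
          (Ideal.span {monomial (baseExp (B i)) (1 : k)}) ↔ M.IsCriticalIndex (B i) p := by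
  rw [mem_colon_iff_exists_subset_insert,
    ← exists_lt_subset_insert_iff_isCriticalIndex hbase hall hsort]
  rfl

end LexSorted

theorem stmt_10_general (k : Type) [Field k] (n t : ℕ)
    (M : Matroid (Fin n))
    (B : Fin t → Finset (Fin n))
    (hbase : ∀ i, M.IsBase ↑(B i))
    (hall : ∀ C : Finset (Fin n), M.IsBase ↑C → ∃ i, B i = C)
    (hsort : ∀ i j : Fin t, i < j → lexLT (B i) (B j)) :
    ∀ i : Fin t, ∀ j : Fin n,
      (X j : MvPolynomial (Fin n) k) ∈
        Submodule.colon
          (Ideal.span ((fun l => monomial (baseExp (B l)) (1 : k)) '' {l | l < i}))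
          (Ideal.span {monomial (baseExp (B i)) (1 : k)}) →
      ∀ (κ : Fin t) (β : Fin n →₀ ℕ),
        Finsupp.single j 1 + baseExp (B i) = β + baseExp (B κ) →
        (∀ g ∈ β.support,
          (X g : MvPolynomial (Fin n) k) ∉
            Submodule.colon
              (Ideal.span ((fun l => monomial (baseExp (B l)) (1 : k)) '' {l | l < κ}))
              (Ideal.span {monomial (baseExp (B κ)) (1 : k)})) →
        (∃ l : Fin n, β = Finsupp.single l 1)
        ∧
        {g : Fin n | (X g : MvPolynomial (Fin n) k) ∈
            Submodule.colon
              (Ideal.span ((fun l => monomial (baseExp (B l)) (1 : k)) '' {l | l < κ}))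
              (Ideal.span {monomial (baseExp (B κ)) (1 : k)})}
          ⊆
        {g : Fin n | (X g : MvPolynomial (Fin n) k) ∈
            Submodule.colon
              (Ideal.span ((fun l => monomial (baseExp (B l)) (1 : k)) '' {l | l < i}))
              (Ideal.span {monomial (baseExp (B i)) (1 : k)})} := by
  simp only [mem_colon_iff_isCriticalIndex hbase hall hsort]
  intro i j hj κ β hdecomp hβ
  obtain ⟨g, hg, rfl, hκ⟩ := exists_eq_single_of_baseExp_eq_add (E := insert j (B i)) (D := B κ)
    (by rwa [baseExp_insert hj.1])
    (by rw [card_insert_of_notMem hj.1, (hbase i).card_eq_card (hbase κ)])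
  refine ⟨⟨g, rfl⟩, ?_⟩
  obtain rfl | hgj := eq_or_ne g j
  · obtain rfl : κ = i := injective_of_lexLT_sorted hsort (by rw [hκ, erase_insert hj.1])
    rfl
  · rw [hκ, erase_insert_of_ne hgj.symm] at hβ ⊢
    exact fun p hp => hp.of_exchange (hbase i) ((mem_insert.1 hg).resolve_left hgj) hj.1
      (hβ g (by simp))

/-- Let `M` be a matroid on `{1,…,n}` with bases `B_1, …, B_t` listed in
increasing lexicographic order, let `I` be the squarefree matroidal ideal generated by the
`m_i = x^{B_i}` (which has linear quotients), and let `A_i` be the critical-index sets.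
Then `I` is crit-monotone: for every `i` and every `j ∈ A_i`, the unique decomposition
`x_j·m_i = u·m_κ` with `supp(u) ∩ A_κ = ∅` has `u` equal to a single variable `x_l`, and
`A_κ ⊆ A_i`. -/
theorem stmt_10 (k : Type) [Field k] (n t : ℕ)
    (M : Matroid (Fin n)) (hE : M.E = Set.univ)
    (B : Fin t → Finset (Fin n))
    (hbase : ∀ i, M.IsBase ↑(B i))
    (hall : ∀ C : Finset (Fin n), M.IsBase ↑C → ∃ i, B i = C)
    (hsort : ∀ i j : Fin t, i < j → lexLT (B i) (B j)) :
    ∀ i : Fin t, ∀ j : Fin n,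
      (X j : MvPolynomial (Fin n) k) ∈
        Submodule.colon
          (Ideal.span ((fun l => monomial (baseExp (B l)) (1 : k)) '' {l | l < i}))
          (Ideal.span {monomial (baseExp (B i)) (1 : k)}) →
      ∀ (κ : Fin t) (β : Fin n →₀ ℕ),
        Finsupp.single j 1 + baseExp (B i) = β + baseExp (B κ) →
        (∀ g ∈ β.support,
          (X g : MvPolynomial (Fin n) k) ∉
            Submodule.colon
              (Ideal.span ((fun l => monomial (baseExp (B l)) (1 : k)) '' {l | l < κ}))
              (Ideal.span {monomial (baseExp (B κ)) (1 : k)})) →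
        (∃ l : Fin n, β = Finsupp.single l 1)
        ∧
        {g : Fin n | (X g : MvPolynomial (Fin n) k) ∈
            Submodule.colon
              (Ideal.span ((fun l => monomial (baseExp (B l)) (1 : k)) '' {l | l < κ}))
              (Ideal.span {monomial (baseExp (B κ)) (1 : k)})}
          ⊆
        {g : Fin n | (X g : MvPolynomial (Fin n) k) ∈
            Submodule.colon
              (Ideal.span ((fun l => monomial (baseExp (B l)) (1 : k)) '' {l | l < i}))
              (Ideal.span {monomial (baseExp (B i)) (1 : k)})} :=
  stmt_10_general k n t M B hbase hall hsort
end
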